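/- If a standard rule R is scale invariant, then the historically induced rule is scale invariant: for any ρ > 0, Φ(R)(N, ρc, ρE, ρh) = ρ·Φ(R)(N,c,E,h), where ρh scales all past claims and awards by ρ. -/

import Mathlib

/-!
Scale invariance of `R` turns the rule applied to the scaled adjusted claims `ρ c̃` into
`ρ R(c̃, E)`, so both `ρ Φ(R)(c, E, h)` and `Φ(R)(ρc, ρE, ρh)` are of the form
`i ↦ min (ρ cᵢ) (ρ Rᵢ(c̃, E) + μ)`, with `μ = ρλ` and `μ = λ'` respectively. Each coordinate is
monotone in `μ`, and both allocations sum to `ρ E`; monotone families with equal sums agree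
coordinatewise, so the two allocations coincide.
-/

/-- A standard rule: on each valid claims problem it yields a bounded, balanced allocation. -/
def IsRule (n : ℕ) (R : (Fin n → ℝ) → ℝ → (Fin n → ℝ)) : Prop :=
  ∀ c E, (∀ i, 0 ≤ c i) → 0 ≤ E → E ≤ ∑ i, c i →
    (∀ i, 0 ≤ R c E i ∧ R c E i ≤ c i) ∧ ∑ i, R c E i = E

open Finset

theorem Finset.apply_eq_apply_of_monotone_of_sum_eq {ι α M : Type*} [LinearOrder α]
    [AddCommMonoid M] [PartialOrder M] [IsOrderedCancelAddMonoid M]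
    {s : Finset ι} {f : ι → α → M} (hf : ∀ i ∈ s, Monotone (f i)) {a b : α}
    (h : ∑ i ∈ s, f i a = ∑ i ∈ s, f i b) : ∀ i ∈ s, f i a = f i b := by
  rcases le_total a b with hab | hba
  · exact (sum_eq_sum_iff_of_le fun i hi => hf i hi hab).1 h
  · exact fun i hi => ((sum_eq_sum_iff_of_le fun i hi => hf i hi hba).1 h.symm i hi).symm

theorem historical_preserves_scale_invariance_general
    (n T : ℕ) (c : Fin n → ℝ) (E : ℝ) (ρ : ℝ) (hρ : 0 < ρ)
    (hc : ∀ i, 0 ≤ c i) (hE0 : 0 ≤ E) (hEC : E ≤ ∑ i, c i)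
    (ch xh : Fin T → Fin n → ℝ)
    (hhist : ∀ t i, 0 ≤ xh t i ∧ xh t i ≤ ch t i)
    (ctil : Fin n → ℝ)
    (hctil : ∀ i, ctil i = c i + ∑ t, (ch t i - xh t i))
    (R : (Fin n → ℝ) → ℝ → (Fin n → ℝ))
    (hSI : ∀ c' E' (σ : ℝ), (∀ k, 0 ≤ c' k) → 0 ≤ E' → E' ≤ ∑ k, c' k → 0 < σ →
      ∀ i, R (fun k => σ * c' k) (σ * E') i = σ * R c' E' i)
    (l l' : ℝ)
    (hsum : ∑ i, min (c i) (R ctil E i + l) = E)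
    (hsum' : ∑ i, min (ρ * c i) (R (fun k => ρ * ctil k) (ρ * E) i + l') = ρ * E) :
    ∀ i, min (ρ * c i) (R (fun k => ρ * ctil k) (ρ * E) i + l') =
      ρ * min (c i) (R ctil E i + l) := by
  have hc_le : ∀ i, c i ≤ ctil i := fun i => by
    rw [hctil]
    exact le_add_of_nonneg_right (sum_nonneg fun t _ => sub_nonneg.2 (hhist t i).2)
  have hscale : ∀ i, R (fun k => ρ * ctil k) (ρ * E) i = ρ * R ctil E i :=
    hSI ctil E ρ (fun k => (hc k).trans (hc_le k)) hE0
      (hEC.trans (sum_le_sum fun k _ => hc_le k)) hρ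
  have hmul : ∀ i, ρ * min (c i) (R ctil E i + l) = min (ρ * c i) (ρ * R ctil E i + ρ * l) :=
    fun i => by rw [mul_min_of_nonneg _ _ hρ.le, mul_add]
  have hmono : ∀ i ∈ univ, Monotone fun μ => min (ρ * c i) (ρ * R ctil E i + μ) :=
    fun i _ _ _ h => min_le_min le_rfl (add_le_add_right h _)
  have hsums : ∑ i, min (ρ * c i) (ρ * R ctil E i + l') =
      ∑ i, min (ρ * c i) (ρ * R ctil E i + ρ * l) :=
    calc _ = ρ * E := by simp only [← hscale, hsum']
      _ = _ := by simp only [← hmul, ← mul_sum, hsum]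
  intro i
  rw [hscale i, hmul i]
  exact apply_eq_apply_of_monotone_of_sum_eq hmono hsums i (mem_univ i)

theorem historical_preserves_scale_invariance
    (n T : ℕ) (c : Fin n → ℝ) (E : ℝ) (ρ : ℝ) (hρ : 0 < ρ)
    (hc : ∀ i, 0 ≤ c i) (hE0 : 0 ≤ E) (hEC : E ≤ ∑ i, c i)
    (ch xh : Fin T → Fin n → ℝ)
    (hhist : ∀ t i, 0 ≤ xh t i ∧ xh t i ≤ ch t i)
    (ctil : Fin n → ℝ)
    (hctil : ∀ i, ctil i = c i + ∑ t, (ch t i - xh t i))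
    (R : (Fin n → ℝ) → ℝ → (Fin n → ℝ)) (hR : IsRule n R)
    (hSI : ∀ c' E' (σ : ℝ), (∀ k, 0 ≤ c' k) → 0 ≤ E' → E' ≤ ∑ k, c' k → 0 < σ →
      ∀ i, R (fun k => σ * c' k) (σ * E') i = σ * R c' E' i)
    (l l' : ℝ) (hl : 0 ≤ l) (hl' : 0 ≤ l')
    (hsum : ∑ i, min (c i) (R ctil E i + l) = E)
    (hsum' : ∑ i, min (ρ * c i) (R (fun k => ρ * ctil k) (ρ * E) i + l') = ρ * E) :
    ∀ i, min (ρ * c i) (R (fun k => ρ * ctil k) (ρ * E) i + l') =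
      ρ * min (c i) (R ctil E i + l) :=
  historical_preserves_scale_invariance_general n T c E ρ hρ hc hE0 hEC ch xh hhist ctil hctil R hSI
    l l' hsum hsum'
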